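/- Let d ≤ n, let r ≥ 1 and μ₀ ≥ 1 be such that r < n and ℓ = d/(r·μ₀) is a positive integer, and let 𝒳 be the set of d×n real matrices of rank at most r whose column space U satisfies μ(U) ≤ μ₀. For every integer m, every probability distribution q over lists Ω of m entry indices from [d]×[n], and every (possibly randomized) estimator f mapping a pair (Ω, X_Ω) consisting of the observed index list and the corresponding matrix values to a d×n matrix, the worst-case error probability satisfies sup_{X ∈ 𝒳} P_{Ω∼q, f}[ f(Ω, X_Ω) ≠ X ] ≥ 1/2 − ⌈ m / ((1 − (r−1)/(r·μ₀))·d) ⌉ / (2·(n−r)). In particular, every passive (non-adaptive) sampling scheme with recovery probability bounded away from 1/2 over 𝒳 requires m = Ω((dn − dr)(1 + 1/(rμ₀) − 1/μ₀)) observations. -/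

import Mathlib

open Matrix

/-- Coherence μ(S) = (d/rank S)·max_i ‖P_S e_i‖₂² of a subspace S ⊆ ℝ^d. -/
noncomputable def submodCoh {d : ℕ} (S : Submodule ℝ (EuclideanSpace ℝ (Fin d))) : ℝ :=
  ((d : ℝ) / (Module.finrank ℝ S)) *
    ⨆ i : Fin d,
      ‖(Submodule.orthogonalProjectionOnto S (EuclideanSpace.single i 1) : EuclideanSpace ℝ (Fin d))‖ ^ 2

/-- The column space of a d×n matrix, as a subspace of ℝ^d. -/
noncomputable def colSpace {d n : ℕ} (X : Matrix (Fin d) (Fin n) ℝ) :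
    Submodule ℝ (EuclideanSpace ℝ (Fin d)) :=
  LinearMap.range (Matrix.toEuclideanLin X)

/-- Error probability of a (possibly randomized) estimator `f` that, given the sampled index
list Ω ~ q and the corresponding entry values X_Ω of the matrix X, outputs a random guess:
P_{Ω ∼ q, f}[ f(Ω, X_Ω) ≠ X ]. -/
noncomputable def errProb {d n : ℕ} {m : ℕ} (q : PMF (Fin m → Fin d × Fin n))
    (f : (Fin m → Fin d × Fin n) → (Fin m → ℝ) → PMF (Matrix (Fin d) (Fin n) ℝ))
    (X : Matrix (Fin d) (Fin n) ℝ) : ℝ :=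
  ((q.bind fun Ω => f Ω fun j => X (Ω j).1 (Ω j).2).toOuterMeasure {Y | Y ≠ X}).toReal

open Finset
open scoped RealInnerProductSpace ENNReal

/-!
Le Cam's two-point method. Split the rows into `r` consecutive blocks of at least `ℓ` rows each
and, for a sign vector `w`, let `X_w` have one column per block `t`, equal to the indicator of
block `t` multiplied by `w`, and zero columns elsewhere. The column space is spanned by `r`
pairwise orthogonal vectors, so `‖P e_i‖² = 1 / |block of i| ≤ 1 / ℓ` and the coherence is at
most `d / (rℓ) = μ₀`. Flipping the sign of `w` at a row `i` changes `X_w` in the single entry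
`(i, column of the block of i)`, and as the block columns may be placed anywhere, every entry
`x` arises this way. No estimator can tell the two matrices apart unless `x` is sampled, so
their error probabilities add up to at least `1 - P(x ∈ Ω)`. Since `Ω` contains at most `m`
entries, some `x` is sampled with probability at most `m / (dn) ≤ ⌈m / (d - (r-1)ℓ)⌉ / (n - r)`.
-/

lemma colSpace_eq_span_col {d n : ℕ} (M : Matrix (Fin d) (Fin n) ℝ) :
    colSpace M = Submodule.span ℝ (Set.range fun j => WithLp.toLp 2 (M.col j)) := by
  ext x
  rw [Submodule.mem_span_range_iff_exists_fun, colSpace, LinearMap.mem_range]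
  constructor
  · rintro ⟨v, rfl⟩
    exact ⟨v, by ext i; simp [Matrix.mulVec, dotProduct, mul_comm]⟩
  · rintro ⟨c, rfl⟩
    exact ⟨WithLp.toLp 2 c, by ext i; simp [Matrix.mulVec, dotProduct, mul_comm]⟩

lemma rank_eq_finrank_colSpace {d n : ℕ} (M : Matrix (Fin d) (Fin n) ℝ) :
    M.rank = Module.finrank ℝ (colSpace M) := by
  rw [colSpace_eq_span_col, rank_eq_finrank_span_cols, Set.range_comp' (WithLp.toLp 2) M.col]
  rw [← LinearEquiv.finrank_map_eq (WithLp.linearEquiv 2 ℝ (Fin d → ℝ)).symm, Submodule.map_span]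
  rfl

lemma starProjection_span_range_eq_of_orthogonal {E ι : Type*} [NormedAddCommGroup E]
    [InnerProductSpace ℝ E] (u : ι → E)
    [(Submodule.span ℝ (Set.range u)).HasOrthogonalProjection]
    (hu : Pairwise fun s t => ⟪u s, u t⟫ = 0) {t : ι} {x : E} (hx : ∀ s ≠ t, ⟪u s, x⟫ = 0) :
    (Submodule.span ℝ (Set.range u)).starProjection x = (ℝ ∙ u t).starProjection x := by
  refine Submodule.eq_starProjection_of_mem_orthogonal
    (Submodule.span_mono (by simp) (Submodule.coe_mem _)) ?_
  have hortho : (ℝ ∙ (x - (ℝ ∙ u t).starProjection x)) ⟂ Submodule.span ℝ (Set.range u) := by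
    refine Submodule.isOrtho_span.mpr ?_
    rintro _ rfl _ ⟨s, rfl⟩
    rcases eq_or_ne s t with rfl | hst
    · exact Submodule.mem_orthogonal_singleton_iff_inner_left.mp
        (Submodule.sub_starProjection_mem_orthogonal x)
    · rw [Submodule.starProjection_singleton, inner_sub_left, real_inner_smul_left,
        real_inner_comm, hx s hst, hu (Ne.symm hst), mul_zero, sub_zero]
  exact Submodule.isOrtho_iff_le.mp hortho (Submodule.mem_span_singleton_self _)

section BlockSubspace
variable {d : ℕ} {κ : Type*} [DecidableEq κ] (b : Fin d → κ) (w : Fin d → ℝ)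

noncomputable def blockVec (t : κ) : EuclideanSpace ℝ (Fin d) :=
  WithLp.toLp 2 fun i => if b i = t then w i else 0

lemma inner_blockVec_of_ne {s t : κ} (hst : s ≠ t) : ⟪blockVec b w s, blockVec b w t⟫ = 0 := by
  refine Finset.sum_eq_zero fun i _ => ?_
  by_cases hs : b i = s
  · simp [blockVec, hs, hst]
  · simp [blockVec, hs]

lemma inner_blockVec_single (t : κ) (i : Fin d) :
    ⟪blockVec b w t, EuclideanSpace.single i 1⟫ = if b i = t then w i else 0 := by
  simp [blockVec, EuclideanSpace.inner_single_right]

variable {w}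

lemma norm_blockVec_sq (hw : ∀ i, w i ^ 2 = 1) (t : κ) :
    ‖blockVec b w t‖ ^ 2 = #{i | b i = t} := by
  rw [EuclideanSpace.norm_sq_eq, Finset.card_filter, Nat.cast_sum]
  refine Finset.sum_congr rfl fun i _ => ?_
  by_cases h : b i = t <;> simp [blockVec, h, hw]

lemma norm_starProjection_span_blockVec_single_sq (hw : ∀ i, w i ^ 2 = 1) (i : Fin d) :
    ‖(Submodule.span ℝ (Set.range (blockVec b w))).starProjection (EuclideanSpace.single i 1)‖ ^ 2
      = 1 / #{j | b j = b i} := by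
  rw [starProjection_span_range_eq_of_orthogonal _ (fun s t => inner_blockVec_of_ne b w)
      (t := b i) fun s hs => by rw [inner_blockVec_single, if_neg (Ne.symm hs)],
    Submodule.starProjection_singleton, norm_smul, mul_pow, inner_blockVec_single, if_pos rfl,
    Real.norm_eq_abs, sq_abs, norm_blockVec_sq b hw]
  have hcard : (#{j | b j = b i} : ℝ) ≠ 0 := by
    exact_mod_cast (Finset.card_pos.mpr ⟨i, by simp⟩).ne'
  rw [RCLike.ofReal_real_eq_id, id, div_pow, hw]
  field_simp

variable [Fintype κ]

lemma finrank_span_blockVec (hw : ∀ i, w i ^ 2 = 1) (hb : Function.Surjective b) :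
    Module.finrank ℝ (Submodule.span ℝ (Set.range (blockVec b w))) = Fintype.card κ := by
  refine finrank_span_eq_card (linearIndependent_of_ne_zero_of_inner_eq_zero (fun t => ?_)
    fun s t => inner_blockVec_of_ne b w)
  obtain ⟨i, rfl⟩ := hb t
  rw [← norm_ne_zero_iff, ← pow_ne_zero_iff two_ne_zero, norm_blockVec_sq b hw]
  exact_mod_cast (Finset.card_pos.mpr ⟨i, by simp⟩).ne'

lemma submodCoh_span_blockVec_le (hw : ∀ i, w i ^ 2 = 1) {ℓ : ℕ} (hℓ : 0 < ℓ)
    (hb : ∀ t, ℓ ≤ #{i | b i = t}) :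
    submodCoh (Submodule.span ℝ (Set.range (blockVec b w))) ≤ d / (Fintype.card κ * ℓ) := by
  have hsurj : Function.Surjective b := fun t => by
    simpa [Finset.card_pos, Finset.Nonempty] using hℓ.trans_le (hb t)
  have hproj (i : Fin d) : ‖(Submodule.orthogonalProjectionOnto (Submodule.span ℝ
      (Set.range (blockVec b w))) (EuclideanSpace.single i 1) : EuclideanSpace ℝ (Fin d))‖ ^ 2
        ≤ 1 / ℓ := by
    rw [← Submodule.starProjection_apply, norm_starProjection_span_blockVec_single_sq b hw]
    gcongr
    exact_mod_cast hb (b i)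
  calc submodCoh _ ≤ d / Fintype.card κ * (1 / ℓ) := by
        rw [submodCoh, finrank_span_blockVec b hw hsurj]
        gcongr
        exact Real.iSup_le hproj (by positivity)
    _ = d / (Fintype.card κ * ℓ) := by rw [div_mul_div_comm, mul_one]

end BlockSubspace

section BlockMatrix
variable {d n : ℕ} {κ : Type*} (b : Fin d → κ) (ι : κ → Fin n) (w : Fin d → ℝ)

noncomputable def blockMatrix : Matrix (Fin d) (Fin n) ℝ :=
  Matrix.of fun i j => if ι (b i) = j then w i else 0

lemma blockMatrix_apply_self (i : Fin d) : blockMatrix b ι w i (ι (b i)) = w i := by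
  simp [blockMatrix]

lemma blockMatrix_apply_eq_of_ne {w' : Fin d → ℝ} {i₀ : Fin d} (hw : ∀ i ≠ i₀, w i = w' i)
    {x : Fin d × Fin n} (hx : x ≠ (i₀, ι (b i₀))) :
    blockMatrix b ι w x.1 x.2 = blockMatrix b ι w' x.1 x.2 := by
  obtain ⟨i, j⟩ := x
  by_cases hi : i = i₀
  · subst hi
    have hj : ι (b i) ≠ j := fun h => hx (by rw [h])
    simp [blockMatrix, hj]
  · simp [blockMatrix, hw i hi]

variable [DecidableEq κ]

lemma colSpace_blockMatrix (hι : ι.Injective) :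
    colSpace (blockMatrix b ι w) = Submodule.span ℝ (Set.range (blockVec b w)) := by
  have hcol (t : κ) : WithLp.toLp 2 ((blockMatrix b ι w).col (ι t)) = blockVec b w t := by
    ext i
    simp [blockVec, blockMatrix, hι.eq_iff]
  rw [colSpace_eq_span_col]
  refine le_antisymm (Submodule.span_le.mpr ?_) (Submodule.span_le.mpr ?_)
  · rintro _ ⟨j, rfl⟩
    by_cases hj : ∃ t, ι t = j
    · obtain ⟨t, rfl⟩ := hj
      exact Submodule.subset_span ⟨t, (hcol t).symm⟩
    · have hzero : WithLp.toLp 2 ((blockMatrix b ι w).col j) = 0 := by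
        ext i
        simp [blockMatrix, show ι (b i) ≠ j from fun h => hj ⟨b i, h⟩]
      rw [SetLike.mem_coe, show (fun j => _) j = _ from hzero]
      exact Submodule.zero_mem _
  · rintro _ ⟨t, rfl⟩
    exact Submodule.subset_span ⟨ι t, hcol t⟩

variable [Fintype κ]

lemma rank_blockMatrix_le (hι : ι.Injective) : (blockMatrix b ι w).rank ≤ Fintype.card κ := by
  rw [rank_eq_finrank_colSpace, colSpace_blockMatrix b ι w hι]
  exact finrank_range_le_card _

variable {w}

lemma submodCoh_colSpace_blockMatrix_le (hι : ι.Injective)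
    (hw : ∀ i, w i ^ 2 = 1) {ℓ : ℕ} (hℓ : 0 < ℓ) (hb : ∀ t, ℓ ≤ #{i | b i = t}) :
    submodCoh (colSpace (blockMatrix b ι w)) ≤ d / (Fintype.card κ * ℓ) := by
  rw [colSpace_blockMatrix b ι w hι]
  exact submodCoh_span_blockVec_le b hw hℓ hb

end BlockMatrix

def consecutiveBlock {d : ℕ} (r ℓ : ℕ) [NeZero r] (i : Fin d) : Fin r :=
  ⟨min (i / ℓ) (r - 1), by have := NeZero.pos r; omega⟩

lemma le_card_consecutiveBlock_fiber {d r ℓ : ℕ} [NeZero r] (h : r * ℓ ≤ d) (t : Fin r) :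
    ℓ ≤ #{i : Fin d | consecutiveBlock r ℓ i = t} := by
  have hlt : ∀ k ∈ Finset.Ico (t * ℓ) (t * ℓ + ℓ), k < d := fun k hk => by
    have : t * ℓ + ℓ ≤ r * ℓ := by nlinarith [t.isLt]
    simp only [Finset.mem_Ico] at hk
    omega
  have hsub : (Finset.Ico (t * ℓ) (t * ℓ + ℓ)).attachFin hlt ⊆
      ({i | consecutiveBlock r ℓ i = t} : Finset (Fin d)) := fun i hi => by
    rw [Finset.mem_attachFin, Finset.mem_Ico] at hi
    have hdiv : (i : ℕ) / ℓ = t := Nat.div_eq_of_lt_le (by linarith) (by linarith)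
    simp only [consecutiveBlock, Finset.mem_filter, Finset.mem_univ, true_and, Fin.ext_iff, hdiv]
    omega
  simpa using Finset.card_le_card hsub

lemma exists_coherent_pair_differing_only_at {d n r ℓ : ℕ} [NeZero r] (hrn : r ≤ n)
    (hℓ : 0 < ℓ) (hrℓ : r * ℓ ≤ d) (x : Fin d × Fin n) :
    ∃ X Y : Matrix (Fin d) (Fin n) ℝ, X ≠ Y ∧ (∀ y ≠ x, X y.1 y.2 = Y y.1 y.2) ∧
      ∀ Z ∈ ({X, Y} : Set (Matrix (Fin d) (Fin n) ℝ)),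
        Z.rank ≤ r ∧ submodCoh (colSpace Z) ≤ d / (r * ℓ) := by
  set b : Fin d → Fin r := consecutiveBlock r ℓ
  set ι : Fin r → Fin n := Equiv.swap (Fin.castLE hrn (b x.1)) x.2 ∘ Fin.castLE hrn
  have hι : ι.Injective := (Equiv.injective _).comp (Fin.castLE_injective hrn)
  have hιx : ι (b x.1) = x.2 := Equiv.swap_apply_left _ _
  set w : Fin d → ℝ := fun i => if i = x.1 then -1 else 1
  have hmem (v : Fin d → ℝ) (hv : ∀ i, v i ^ 2 = 1) :
      (blockMatrix b ι v).rank ≤ r ∧ submodCoh (colSpace (blockMatrix b ι v)) ≤ d / (r * ℓ) := by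
    simpa using And.intro (rank_blockMatrix_le b ι v hι)
      (submodCoh_colSpace_blockMatrix_le b ι hι hv hℓ (le_card_consecutiveBlock_fiber hrℓ))
  refine ⟨blockMatrix b ι 1, blockMatrix b ι w, fun h => ?_, fun y hy => ?_, ?_⟩
  · have hx := congrFun (congrFun h x.1) (ι (b x.1))
    rw [blockMatrix_apply_self, blockMatrix_apply_self] at hx
    norm_num [w] at hx
  · exact blockMatrix_apply_eq_of_ne b ι 1 (i₀ := x.1) (fun i hi => by simp [w, hi]) (by rwa [hιx])
  · rintro Z (rfl | rfl)
    · exact hmem 1 fun i => by simp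
    · exact hmem w fun i => by by_cases h : i = x.1 <;> simp [w, h]

lemma PMF.toOuterMeasure_ne_add_apply {α : Type*} (p : PMF α) (a : α) :
    p.toOuterMeasure {x | x ≠ a} + p a = 1 := by
  classical
  conv_rhs => rw [← p.tsum_coe, ENNReal.tsum_eq_add_tsum_ite a]
  rw [PMF.toOuterMeasure_apply, add_comm]
  congr 1
  exact tsum_congr fun x => by by_cases h : x = a <;> simp [h]

lemma PMF.toOuterMeasure_apply_ne_top {α : Type*} (p : PMF α) (s : Set α) :
    p.toOuterMeasure s ≠ ⊤ := by
  rw [PMF.toOuterMeasure_apply]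
  exact p.tsum_coe_indicator_ne_top s

lemma PMF.apply_add_apply_le_one {α : Type*} (p : PMF α) {a b : α} (hab : a ≠ b) :
    p a + p b ≤ 1 := by
  classical
  rw [← Finset.sum_pair hab, ← p.tsum_coe]
  exact ENNReal.sum_le_tsum _

section Sampling
variable {α : Type*} {m : ℕ}

noncomputable def hitProb (q : PMF (Fin m → α)) (x : α) : ℝ≥0∞ :=
  q.toOuterMeasure {Ω | x ∈ Set.range Ω}

lemma sum_hitProb_le [Fintype α] (q : PMF (Fin m → α)) : ∑ x, hitProb q x ≤ m := by
  classical
  have hcount : ∀ Ω : Fin m → α, #{x | x ∈ Set.range Ω} ≤ m := fun Ω => by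
    simpa using Finset.card_image_le (s := Finset.univ) (f := Ω)
  simp only [hitProb, PMF.toOuterMeasure_apply]
  rw [← Summable.tsum_finsetSum (fun _ _ => ENNReal.summable)]
  calc ∑' Ω, ∑ x, {Ω : Fin m → α | x ∈ Set.range Ω}.indicator q Ω
      ≤ ∑' Ω, q Ω * m := ENNReal.tsum_le_tsum fun Ω => by
        simp only [Set.indicator_apply, Set.mem_ofPred_eq, ← Finset.sum_filter, Finset.sum_const,
          nsmul_eq_mul, mul_comm (q Ω)]
        gcongr
        exact_mod_cast hcount Ω
    _ = m := by rw [ENNReal.tsum_mul_right, PMF.tsum_coe, one_mul]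

lemma exists_hitProb_le [Fintype α] [Nonempty α] (q : PMF (Fin m → α)) :
    ∃ x, (hitProb q x).toReal ≤ m / Fintype.card α := by
  have hle : ∀ x, hitProb q x ≠ ⊤ := fun x =>
    ne_top_of_le_ne_top (ENNReal.natCast_ne_top m)
      ((Finset.single_le_sum (by simp) (Finset.mem_univ x)).trans (sum_hitProb_le q))
  have hsum : ∑ x, (hitProb q x).toReal ≤ ∑ _x : α, (m / Fintype.card α : ℝ) := by
    rw [← ENNReal.toReal_sum fun x _ => hle x, Finset.sum_const, Finset.card_univ, nsmul_eq_mul,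
      mul_div_cancel₀ _ (by positivity)]
    exact ENNReal.toReal_le_of_le_ofReal (by positivity) (by simpa using sum_hitProb_le q)
  obtain ⟨x, -, hx⟩ := Finset.exists_le_of_sum_le Finset.univ_nonempty hsum
  exact ⟨x, hx⟩

end Sampling

section Estimation
variable {d n m : ℕ} (q : PMF (Fin m → Fin d × Fin n))
  (f : (Fin m → Fin d × Fin n) → (Fin m → ℝ) → PMF (Matrix (Fin d) (Fin n) ℝ))

noncomputable def successProb (X : Matrix (Fin d) (Fin n) ℝ) : ℝ≥0∞ :=
  (q.bind fun Ω => f Ω fun j => X (Ω j).1 (Ω j).2) X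

lemma errProb_eq_one_sub_successProb (X : Matrix (Fin d) (Fin n) ℝ) :
    errProb q f X = 1 - (successProb q f X).toReal := by
  have h := PMF.toOuterMeasure_ne_add_apply (q.bind fun Ω => f Ω fun j => X (Ω j).1 (Ω j).2) X
  have h' := congrArg ENNReal.toReal h
  rw [ENNReal.toReal_add (PMF.toOuterMeasure_apply_ne_top _ _) (PMF.apply_ne_top _ _),
    ENNReal.toReal_one] at h'
  rw [errProb, successProb]
  linarith

lemma successProb_add_successProb_le {X Y : Matrix (Fin d) (Fin n) ℝ} (hXY : X ≠ Y)
    {x : Fin d × Fin n} (hagree : ∀ y ≠ x, X y.1 y.2 = Y y.1 y.2) :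
    successProb q f X + successProb q f Y ≤ 1 + hitProb q x := by
  rw [successProb, successProb, PMF.bind_apply, PMF.bind_apply, ← ENNReal.tsum_add, hitProb,
    PMF.toOuterMeasure_apply, ← q.tsum_coe, ← ENNReal.tsum_add]
  refine ENNReal.tsum_le_tsum fun Ω => ?_
  rw [← mul_add]
  by_cases hΩ : x ∈ Set.range Ω
  · simp only [Set.indicator_apply, Set.mem_ofPred_eq, hΩ, if_true]
    rw [← two_mul, mul_comm 2]
    exact mul_le_mul_right (by
      calc _ ≤ (1 : ℝ≥0∞) + 1 := add_le_add (PMF.coe_le_one _ _) (PMF.coe_le_one _ _)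
        _ = 2 := one_add_one_eq_two) _
  · have hobs : (fun j => X (Ω j).1 (Ω j).2) = fun j => Y (Ω j).1 (Ω j).2 :=
      funext fun j => hagree (Ω j) fun h => hΩ ⟨j, h⟩
    simp only [Set.indicator_apply, Set.mem_ofPred_eq, hΩ, if_false, add_zero]
    rw [hobs]
    exact mul_le_of_le_one_right' (PMF.apply_add_apply_le_one _ hXY)

lemma one_sub_hitProb_le_errProb_add_errProb {X Y : Matrix (Fin d) (Fin n) ℝ} (hXY : X ≠ Y)
    {x : Fin d × Fin n} (hagree : ∀ y ≠ x, X y.1 y.2 = Y y.1 y.2) :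
    1 - (hitProb q x).toReal ≤ errProb q f X + errProb q f Y := by
  have hsucc (Z : Matrix (Fin d) (Fin n) ℝ) : successProb q f Z ≠ ⊤ := PMF.apply_ne_top _ _
  have hhit : hitProb q x ≠ ⊤ := PMF.toOuterMeasure_apply_ne_top _ _
  have h := ENNReal.toReal_mono (ENNReal.add_ne_top.2 ⟨ENNReal.one_ne_top, hhit⟩)
    (successProb_add_successProb_le q f hXY hagree)
  rw [ENNReal.toReal_add (hsucc X) (hsucc Y),
    ENNReal.toReal_add ENNReal.one_ne_top hhit, ENNReal.toReal_one] at h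
  rw [errProb_eq_one_sub_successProb, errProb_eq_one_sub_successProb]
  linarith

end Estimation

lemma div_mul_le_ceil_div {d n r : ℕ} {μ₀ : ℝ} (hd : 0 < d) (hr : 1 ≤ r) (hrn : r < n)
    (hμ₀ : 1 ≤ μ₀) (m : ℕ) :
    (m : ℝ) / (d * n) ≤ ⌈(m : ℝ) / ((1 - ((r : ℝ) - 1) / (r * μ₀)) * d)⌉₊ / (n - r) := by
  set c : ℝ := 1 - ((r : ℝ) - 1) / (r * μ₀)
  have hrR : (1 : ℝ) ≤ r := by exact_mod_cast hr
  have hc0 : 0 < c := sub_pos.mpr ((div_lt_one (by nlinarith)).mpr (by nlinarith))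
  have hc1 : c ≤ 1 := sub_le_self _ (div_nonneg (by linarith) (by positivity))
  have hnr : (0 : ℝ) < n - r := sub_pos.mpr (by exact_mod_cast hrn)
  have hdR : (0 : ℝ) < d := by exact_mod_cast hd
  calc (m : ℝ) / (d * n) ≤ m / (c * d * n) := by
        gcongr
        · exact mul_pos (mul_pos hc0 hdR) (by linarith)
        · exact mul_le_of_le_one_left (by positivity) hc1
    _ = m / (c * d) / n := by rw [div_div]
    _ ≤ ⌈(m : ℝ) / (c * d)⌉₊ / n := by gcongr; exact Nat.le_ceil _
    _ ≤ ⌈(m : ℝ) / (c * d)⌉₊ / (n - r) := by gcongr; linarith [(Nat.cast_nonneg r : (0 : ℝ) ≤ r)]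

theorem passive_completion_lower_bound_general
    {d n r : ℕ} (hr : 1 ≤ r) (hrn : r < n)
    (μ₀ : ℝ) (hμ₀ : 1 ≤ μ₀)
    (ℓ : ℕ) (hℓ : 0 < ℓ) (hℓeq : (ℓ : ℝ) = d / (r * μ₀))
    (m : ℕ)
    (q : PMF (Fin m → Fin d × Fin n))
    (f : (Fin m → Fin d × Fin n) → (Fin m → ℝ) → PMF (Matrix (Fin d) (Fin n) ℝ)) :
    ∃ X : Matrix (Fin d) (Fin n) ℝ,
      X.rank ≤ r ∧ submodCoh (colSpace X) ≤ μ₀ ∧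
        (1 / 2 : ℝ) - (⌈(m : ℝ) / ((1 - ((r : ℝ) - 1) / (r * μ₀)) * d)⌉₊ : ℝ) /
            (2 * ((n : ℝ) - r)) ≤ errProb q f X := by
  have : NeZero r := ⟨by omega⟩
  have hrℓμ : (d : ℝ) = r * ℓ * μ₀ := by
    rw [hℓeq]
    field_simp
  have hrℓ : r * ℓ ≤ d := by
    have : (r * ℓ : ℝ) ≤ d := by nlinarith
    exact_mod_cast this
  have hd : 0 < d := (Nat.mul_pos (NeZero.pos r) hℓ).trans_le hrℓ
  have hμ : (d : ℝ) / (r * ℓ) = μ₀ := by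
    rw [hrℓμ]
    field_simp
  have : Nonempty (Fin d × Fin n) := ⟨(⟨0, hd⟩, ⟨0, by omega⟩)⟩
  obtain ⟨x, hx⟩ := exists_hitProb_le q
  obtain ⟨X, Y, hXY, hagree, hclass⟩ := exists_coherent_pair_differing_only_at hrn.le hℓ hrℓ x
  have hsum := one_sub_hitProb_le_errProb_add_errProb q f hXY hagree
  have hhit := hx.trans (by simpa using div_mul_le_ceil_div hd hr hrn hμ₀ m)
  rw [hμ] at hclass
  obtain ⟨Z, hZ, hZerr⟩ :
      ∃ Z ∈ ({X, Y} : Set _), (1 - (hitProb q x).toReal) / 2 ≤ errProb q f Z := by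
    rcases le_total (errProb q f X) (errProb q f Y) with h | h
    · exact ⟨Y, by simp, by linarith⟩
    · exact ⟨X, by simp, by linarith⟩
  refine ⟨Z, (hclass Z hZ).1, (hclass Z hZ).2, ?_⟩
  rw [div_mul_eq_div_div_swap]
  linarith

/-- Theorem 2 (lower bound for passive matrix completion): let d ≤ n, 1 ≤ r < n, μ₀ ≥ 1 with
ℓ = d/(r·μ₀) a positive integer.  For every sampling budget m, every passive sampling
distribution q over lists of m entry indices, and every (possibly randomized) estimator f,
there is a d×n matrix X of rank at most r whose column space has coherence at most μ₀ on which
the probability of error is at least 1/2 − ⌈m/((1 − (r−1)/(r·μ₀))·d)⌉/(2·(n−r)).  (In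
particular, the worst-case error probability over this class, i.e. its supremum, satisfies the
same bound, so any passive scheme with error bounded away from 1/2 needs
m = Ω((dn − dr)(1 + 1/(rμ₀) − 1/μ₀)) observations.) -/
theorem passive_completion_lower_bound
    {d n r : ℕ} (hdn : d ≤ n) (hr : 1 ≤ r) (hrn : r < n)
    (μ₀ : ℝ) (hμ₀ : 1 ≤ μ₀)
    (ℓ : ℕ) (hℓ : 0 < ℓ) (hℓeq : (ℓ : ℝ) = d / (r * μ₀))
    (m : ℕ)
    (q : PMF (Fin m → Fin d × Fin n))
    (f : (Fin m → Fin d × Fin n) → (Fin m → ℝ) → PMF (Matrix (Fin d) (Fin n) ℝ)) :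
    ∃ X : Matrix (Fin d) (Fin n) ℝ,
      X.rank ≤ r ∧ submodCoh (colSpace X) ≤ μ₀ ∧
        (1 / 2 : ℝ) - (⌈(m : ℝ) / ((1 - ((r : ℝ) - 1) / (r * μ₀)) * d)⌉₊ : ℝ) /
            (2 * ((n : ℝ) - r)) ≤ errProb q f X :=
  passive_completion_lower_bound_general hr hrn μ₀ hμ₀ ℓ hℓ hℓeq m q f
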